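/- For every n ≥ 0, the total number of tiles in the n-th boat–star supertile generated from a single star equals P(n) = (25+9√5)/22 · φ^{4n} − (5/33)·4^{n+1} − 2/3 + (25−9√5)/22 · φ^{−4n}, where φ = (1+√5)/2. Formally: with M the boat–star substitution matrix, w = (1,1,1,1,1,1)ᵀ, and e₁ the first standard basis vector, ⟨w, Mⁿ e₁⟩ = P(n) for all n ∈ ℕ. -/

import Mathlib

open Real Matrix

noncomputable def boatStarM : Matrix (Fin 6) (Fin 6) ℝ :=
  !![1,1,1,0,0,0;
     5,3,1,0,0,0;
     0,0,0,2,1,0;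
     5,3,1,4,2,0;
     0,0,0,1,3,5;
     0,0,0,1,1,1]

noncomputable def goldenφ : ℝ := (1 + Real.sqrt 5) / 2

/-!
The starting vector `e₀` is a combination of four eigenvectors of `boatStarM`, with eigenvalues
`φ⁴ = (7 + 3√5)/2`, its Galois conjugate `φ⁻⁴ = (7 - 3√5)/2`, `4` and `1`; so `Mⁿ e₀` is the same
combination scaled by the `n`-th powers, and summing the coordinates of each eigenvector gives
the four coefficients of the formula. The conjugate pair is written once, as a function of a
square root `s` of `5`.
-/

theorem Matrix.pow_mulVec_of_mulVec_eq_smul {ι R : Type*} [Fintype ι] [DecidableEq ι]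
    [CommSemiring R] {A : Matrix ι ι R} {v : ι → R} {μ : R} (h : A *ᵥ v = μ • v) (n : ℕ) :
    (A ^ n) *ᵥ v = μ ^ n • v := by
  induction n with
  | zero => simp
  | succ n ih => rw [pow_succ', ← mulVec_mulVec, ih, mulVec_smul, h, smul_smul, pow_succ]

lemma half_one_add_pow_four {s : ℝ} (hs : s ^ 2 = 5) : ((1 + s) / 2) ^ 4 = (7 + 3 * s) / 2 := by
  linear_combination ((s ^ 2 + 4 * s + 11) / 16) * hs

lemma goldenφ_pow_four : goldenφ ^ 4 = (7 + 3 * √5) / 2 :=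
  half_one_add_pow_four (sq_sqrt (by norm_num))

lemma inv_goldenφ_pow_four : (goldenφ ^ 4)⁻¹ = (7 - 3 * √5) / 2 := by
  rw [show goldenφ = goldenRatio from rfl, ← inv_pow, inv_goldenRatio, Even.neg_pow (by decide),
    goldenConj, sub_eq_add_neg, half_one_add_pow_four (by rw [neg_sq, sq_sqrt (by norm_num)])]
  ring

lemma boatStarM_mulVec (a b c d e f : ℝ) :
    boatStarM *ᵥ ![a, b, c, d, e, f] =
      ![a + b + c, 5 * a + 3 * b + c, 2 * d + e, 5 * a + 3 * b + c + 4 * d + 2 * e,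
        d + 3 * e + 5 * f, d + e + f] := by
  ext i
  fin_cases i <;> simp [boatStarM, mulVec, dotProduct, Fin.sum_univ_six]

noncomputable def boatStarEigvec (s : ℝ) : Fin 6 → ℝ :=
  ![(13 - 5 * s) / 22, (-25 + 13 * s) / 22, (10 - 3 * s) / 11,
    (15 + s) / 22, (-5 + 7 * s) / 22, (7 - s) / 22]

noncomputable def boatStarEigvecFour : Fin 6 → ℝ := ![5/33, 20/33, -5/33, 10/33, -40/33, -10/33]

noncomputable def boatStarFixedVec : Fin 6 → ℝ := ![-1/3, 5/3, -5/3, -5/3, 5/3, -1/3]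

lemma boatStarM_mulVec_eigvec {s : ℝ} (hs : s ^ 2 = 5) :
    boatStarM *ᵥ boatStarEigvec s = ((7 + 3 * s) / 2) • boatStarEigvec s := by
  simp only [boatStarEigvec, boatStarM_mulVec, smul_cons, smul_empty, smul_eq_mul, vecCons_inj]
  refine ⟨?_, ?_, ?_, ?_, ?_, ?_, trivial⟩
  · linear_combination 15 / 44 * hs
  · linear_combination -39 / 44 * hs
  · linear_combination 9 / 22 * hs
  · linear_combination -3 / 44 * hs
  · linear_combination -21 / 44 * hs
  · linear_combination 3 / 44 * hs

lemma boatStarM_mulVec_eigvecFour :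
    boatStarM *ᵥ boatStarEigvecFour = (4 : ℝ) • boatStarEigvecFour := by
  norm_num [boatStarEigvecFour, boatStarM_mulVec]

lemma boatStarM_mulVec_fixedVec : boatStarM *ᵥ boatStarFixedVec = boatStarFixedVec := by
  norm_num [boatStarFixedVec, boatStarM_mulVec]

lemma single_zero_eq_eigvec_sum (s : ℝ) :
    (fun i : Fin 6 => if i = 0 then (1 : ℝ) else 0) =
      boatStarEigvec s + boatStarEigvec (-s) + boatStarEigvecFour + boatStarFixedVec := by
  ext i
  fin_cases i <;> norm_num [boatStarEigvec, boatStarEigvecFour, boatStarFixedVec] <;> ring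

lemma boatStarM_pow_mulVec_single_zero (n : ℕ) {s : ℝ} (hs : s ^ 2 = 5) :
    (boatStarM ^ n) *ᵥ (fun i => if i = 0 then (1 : ℝ) else 0) =
      ((7 + 3 * s) / 2) ^ n • boatStarEigvec s + ((7 - 3 * s) / 2) ^ n • boatStarEigvec (-s)
        + (4 : ℝ) ^ n • boatStarEigvecFour + boatStarFixedVec := by
  have hfixed : (boatStarM ^ n) *ᵥ boatStarFixedVec = boatStarFixedVec := by
    simpa using pow_mulVec_of_mulVec_eq_smul (A := boatStarM) (v := boatStarFixedVec) (μ := 1)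
      (by rw [one_smul, boatStarM_mulVec_fixedVec]) n
  have hconj :
      (boatStarM ^ n) *ᵥ boatStarEigvec (-s) = ((7 - 3 * s) / 2) ^ n • boatStarEigvec (-s) := by
    rw [pow_mulVec_of_mulVec_eq_smul (boatStarM_mulVec_eigvec (by rw [neg_sq, hs])), mul_neg,
      ← sub_eq_add_neg]
  rw [single_zero_eq_eigvec_sum s]
  simp only [mulVec_add, hfixed, hconj, pow_mulVec_of_mulVec_eq_smul (boatStarM_mulVec_eigvec hs),
    pow_mulVec_of_mulVec_eq_smul boatStarM_mulVec_eigvecFour]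

lemma one_dotProduct_boatStarEigvec (s : ℝ) : 1 ⬝ᵥ boatStarEigvec s = (25 + 9 * s) / 22 := by
  simp only [boatStarEigvec, one_dotProduct, Fin.sum_univ_six, Fin.isValue, cons_val_zero,
    cons_val_one, cons_val]
  ring

lemma one_dotProduct_boatStarEigvecFour : 1 ⬝ᵥ boatStarEigvecFour = -20 / 33 := by
  simp only [boatStarEigvecFour, one_dotProduct, Fin.sum_univ_six, Fin.isValue, cons_val_zero,
    cons_val_one, cons_val]
  norm_num

lemma one_dotProduct_boatStarFixedVec : 1 ⬝ᵥ boatStarFixedVec = -2 / 3 := by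
  simp only [boatStarFixedVec, one_dotProduct, Fin.sum_univ_six, Fin.isValue, cons_val_zero,
    cons_val_one, cons_val]
  norm_num

theorem boatStar_total_tile_count (n : ℕ) :
    (fun _ : Fin 6 => (1 : ℝ)) ⬝ᵥ
        (boatStarM ^ n).mulVec (fun i => if i = 0 then (1 : ℝ) else 0) =
      (25 + 9 * Real.sqrt 5) / 22 * goldenφ ^ (4 * n)
        - 5 / 33 * 4 ^ (n + 1) - 2 / 3
        + (25 - 9 * Real.sqrt 5) / 22 * (goldenφ ^ (4 * n))⁻¹ := by
  rw [boatStarM_pow_mulVec_single_zero n (sq_sqrt (by norm_num : (0 : ℝ) ≤ 5)), pow_mul,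
    ← inv_pow, inv_goldenφ_pow_four, goldenφ_pow_four]
  change (1 : Fin 6 → ℝ) ⬝ᵥ _ = _
  simp only [dotProduct_add, dotProduct_smul, one_dotProduct_boatStarEigvec,
    one_dotProduct_boatStarEigvecFour, one_dotProduct_boatStarFixedVec, smul_eq_mul]
  ring
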